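/- Let n > 5 be even and m ≥ 4. In J(n,m), two distinct vertices x, y on the same internal cycle C are mutually maximally distant if and only if both x and y are cycle vertices not adjacent to the central vertex c and d(x,y) = n/2 + 1. -/

import Mathlib

/-- The generalized Jahangir graph `J(n,m)`: vertices are `none` (the central
vertex `c`) and `some a` for `a : ZMod (n*m)` (the cycle vertex `u_{a+1}`).
Cycle vertices are adjacent when consecutive, and `c` is adjacent to
`u_{nk+1}`, i.e. to `some (n*k)`, for `k = 0, …, m-1`. -/
def jahangir (n m : ℕ) : SimpleGraph (Option (ZMod (n * m))) where
  Adj x y :=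
    (x = none ∧ ∃ a : ZMod (n * m), y = some a ∧
        ∃ k : ℕ, k < m ∧ a = ((n * k : ℕ) : ZMod (n * m))) ∨
    (y = none ∧ ∃ a : ZMod (n * m), x = some a ∧
        ∃ k : ℕ, k < m ∧ a = ((n * k : ℕ) : ZMod (n * m))) ∨
    (∃ a b : ZMod (n * m), x = some a ∧ y = some b ∧ a ≠ b ∧ (b = a + 1 ∨ a = b + 1))
  symm := by
    constructor
    rintro x y (⟨hx, a, hy, hk⟩ | ⟨hy, a, hx, hk⟩ | ⟨a, b, hx, hy, hab, h⟩)
    · exact Or.inr (Or.inl ⟨hx, a, hy, hk⟩)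
    · exact Or.inl ⟨hy, a, hx, hk⟩
    · exact Or.inr (Or.inr ⟨b, a, hy, hx, hab.symm, h.symm⟩)
  loopless := by
    constructor
    rintro x (⟨hx, a, hy, _⟩ | ⟨hy, a, hx, _⟩ | ⟨a, b, hx, hy, hab, _⟩)
    · rw [hx] at hy; exact Option.some_ne_none a hy.symm
    · rw [hy] at hx; exact Option.some_ne_none a hx.symm
    · rw [hx] at hy; exact hab (Option.some.inj hy)

/-- `u` and `v` are mutually maximally distant in `G`. -/
def MMD {V : Type*} (G : SimpleGraph V) (u v : V) : Prop :=
  (∀ w, G.Adj u w → G.dist w v ≤ G.dist u v) ∧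
  (∀ w, G.Adj v w → G.dist u w ≤ G.dist u v)

/-- The strong resolving graph of `G`: distinct vertices are adjacent iff MMD. -/
def strongResolvingGraph {V : Type*} (G : SimpleGraph V) : SimpleGraph V where
  Adj u v := u ≠ v ∧ MMD G u v
  symm := by
    constructor
    rintro u v ⟨hne, h1, h2⟩
    refine ⟨hne.symm, ?_, ?_⟩
    · intro w hw
      rw [SimpleGraph.dist_comm, SimpleGraph.dist_comm (u := v)]
      exact h2 w hw
    · intro w hw
      rw [SimpleGraph.dist_comm, SimpleGraph.dist_comm (u := v)]
      exact h1 w hw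
  loopless := by constructor; intro u h; exact h.1 rfl

/-- The vertex covering number `α(G)`. -/
noncomputable def vertexCoverNumber {V : Type*} (G : SimpleGraph V) : ℕ :=
  sInf {k | ∃ S : Finset V, S.card = k ∧ ∀ u v, G.Adj u v → u ∈ S ∨ v ∈ S}

/-- The independence number `β(G)`. -/
noncomputable def indepNumber {V : Type*} (G : SimpleGraph V) : ℕ :=
  sSup {k | ∃ S : Finset V, S.card = k ∧ ∀ u ∈ S, ∀ v ∈ S, ¬ G.Adj u v}

/-- `W` is a strong resolving set of `G`. -/
def IsStrongResolvingSet {V : Type*} (G : SimpleGraph V) (W : Set V) : Prop :=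
  ∀ u v : V, u ≠ v → ∃ w ∈ W,
    G.dist u w = G.dist u v + G.dist v w ∨ G.dist v w = G.dist v u + G.dist u w

/-- The strong metric dimension of `G`. -/
noncomputable def sdim {V : Type*} (G : SimpleGraph V) : ℕ :=
  sInf {k | ∃ W : Finset V, W.card = k ∧ IsStrongResolvingSet G ↑W}

/-- Vertex set of the internal cycle `c u_{nk+1} … u_{n(k+1)+1} c` of `J(n,m)`. -/
def internalCycle (n m k : ℕ) : Set (Option (ZMod (n * m))) :=
  insert none {x | ∃ i ≤ n, x = some ((n * k + i : ℕ) : ZMod (n * m))}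

/-- Cycle vertices of `J(n,m)` not adjacent to the central vertex `c` (the set `U₂`). -/
def inU2 (n m : ℕ) (x : Option (ZMod (n * m))) : Prop :=
  ∃ a : ZMod (n * m), x = some a ∧ ¬ ∃ k : ℕ, k < m ∧ a = ((n * k : ℕ) : ZMod (n * m))

namespace JahP
open SimpleGraph

variable {n m : ℕ}

/-- cyclic distance -/
def cycD {N : ℕ} (a b : ZMod N) : ℕ := min (a - b).val (b - a).val

/-- distance (along the big cycle) to the nearest hub -/
def hubD (n m : ℕ) (a : ZMod (n * m)) : ℕ := min (a.val % n) (n - a.val % n)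

/-- potential function: the claimed distance to `some b0` -/
def pot (n m : ℕ) (b0 : ZMod (n * m)) : Option (ZMod (n * m)) → ℕ
  | none => 1 + hubD n m b0
  | some a => min (cycD a b0) (2 + hubD n m a + hubD n m b0)

lemma valmod [NeZero (n * m)] (t : ℕ) : ((t : ZMod (n * m))).val % n = t % n := by
  rw [ZMod.val_natCast, Nat.mod_mod_of_dvd _ (dvd_mul_right n m)]

lemma adj_succ (h1 : 1 < n * m) (a : ZMod (n * m)) :
    (jahangir n m).Adj (some a) (some (a + 1)) := by
  haveI : Fact (1 < n * m) := ⟨h1⟩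
  exact Or.inr (Or.inr ⟨a, a + 1, rfl, rfl,
    fun h => one_ne_zero (left_eq_add.mp h), Or.inl rfl⟩)

lemma adj_hub {k' : ℕ} (hk' : k' < m) :
    (jahangir n m).Adj none (some ((n * k' : ℕ) : ZMod (n * m))) :=
  Or.inl ⟨rfl, _, rfl, k', hk', rfl⟩

lemma walk_add (h1 : 1 < n * m) (t : ℕ) (a : ZMod (n * m)) :
    ∃ p : (jahangir n m).Walk (some a) (some (a + (t : ZMod (n * m)))), p.length = t := by
  induction t with
  | zero => exact ⟨SimpleGraph.Walk.nil.copy rfl (by simp), by simp⟩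
  | succ t ih =>
      obtain ⟨p, hp⟩ := ih
      refine ⟨(p.concat (adj_succ h1 _)).copy rfl (by push_cast; ring_nf), ?_⟩
      simp [SimpleGraph.Walk.length_concat, hp]

lemma hub_iff [NeZero (n * m)] (h6 : 6 ≤ n) (a : ZMod (n * m)) :
    (∃ k' : ℕ, k' < m ∧ a = ((n * k' : ℕ) : ZMod (n * m))) ↔ a.val % n = 0 := by
  constructor
  · rintro ⟨k', hk', rfl⟩
    rw [valmod]
    exact Nat.mul_mod_right n k'
  · intro h
    refine ⟨a.val / n, Nat.div_lt_of_lt_mul (ZMod.val_lt a), ?_⟩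
    conv_lhs => rw [← ZMod.natCast_zmod_val a]
    exact congrArg _ (Nat.mul_div_cancel' (Nat.dvd_of_mod_eq_zero h)).symm

lemma walk_to_c [NeZero (n * m)] (h6 : 6 ≤ n) (hm4 : 4 ≤ m) (a : ZMod (n * m)) :
    ∃ p : (jahangir n m).Walk (some a) none, p.length = 1 + hubD n m a := by
  have hn0 : 0 < n := by omega
  have hm0 : 0 < m := by omega
  have h1 : 1 < n * m := by
    calc 1 < 6 * 4 := by norm_num
    _ ≤ n * m := Nat.mul_le_mul h6 hm4
  set r := a.val % n with hr
  have hhub : hubD n m a = min r (n - r) := rfl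
  have hrn : r < n := by rw [hr]; exact Nat.mod_lt _ hn0
  have h2 : n * (a.val / n) + r = a.val := by rw [hr]; exact Nat.div_add_mod a.val n
  have hdiv : a.val / n < m := Nat.div_lt_of_lt_mul (ZMod.val_lt a)
  clear_value r
  rcases le_total r (n - r) with hle | hle
  · -- hub below : a - r
    obtain ⟨p, hp⟩ := walk_add h1 r (a - (r : ZMod (n * m)))
    have he : a - (r : ZMod (n * m)) + (r : ZMod (n * m)) = a := by ring
    have hubeq : a - (r : ZMod (n * m)) = ((n * (a.val / n) : ℕ) : ZMod (n * m)) := by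
      conv_lhs => rw [← ZMod.natCast_zmod_val a]
      rw [← Nat.cast_sub (show r ≤ a.val by omega)]
      congr 1
      omega
    have hadj : (jahangir n m).Adj (some (a - (r : ZMod (n * m)))) none := by
      rw [hubeq]
      exact ((adj_hub hdiv).symm :)
    refine ⟨((p.copy rfl (congrArg some he)).reverse.concat hadj), ?_⟩
    rw [SimpleGraph.Walk.length_concat, SimpleGraph.Walk.length_reverse,
      SimpleGraph.Walk.length_copy, hp, hhub]
    omega
  · -- hub above : a + (n - r)
    obtain ⟨p, hp⟩ := walk_add h1 (n - r) a
    have h3 : n * (a.val / n + 1) = n * (a.val / n) + n := by ring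
    have hnat : a.val + (n - r) = n * (a.val / n + 1) := by omega
    have hnat2 : n * (a.val / n + 1) =
        n * ((a.val / n + 1) % m) + (n * m) * ((a.val / n + 1) / m) := by
      conv_lhs => rw [← Nat.mod_add_div (a.val / n + 1) m]
      ring
    have hub2 : a + ((n - r : ℕ) : ZMod (n * m)) =
        ((n * ((a.val / n + 1) % m) : ℕ) : ZMod (n * m)) := by
      conv_lhs => rw [← ZMod.natCast_zmod_val a]
      rw [← Nat.cast_add, hnat, hnat2]
      simp [Nat.cast_add, Nat.cast_mul, ZMod.natCast_self]
    have hadj : (jahangir n m).Adj (some (a + ((n - r : ℕ) : ZMod (n * m)))) none := by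
      rw [hub2]
      exact ((adj_hub (Nat.mod_lt _ hm0)).symm :)
    refine ⟨p.concat hadj, ?_⟩
    rw [SimpleGraph.Walk.length_concat, hp, hhub]
    omega

lemma dist_cyc_le [NeZero (n * m)] (h1 : 1 < n * m) (a b : ZMod (n * m)) :
    (jahangir n m).dist (some a) (some b) ≤ cycD a b := by
  refine le_min ?_ ?_
  · obtain ⟨p, hp⟩ := walk_add h1 ((a - b).val) b
    rw [SimpleGraph.dist_comm]
    calc (jahangir n m).dist (some b) (some a)
        ≤ (p.copy rfl (by rw [ZMod.natCast_zmod_val]; congr 1; ring)).length :=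
          SimpleGraph.dist_le _
      _ = (a - b).val := by rw [SimpleGraph.Walk.length_copy]; exact hp
  · obtain ⟨p, hp⟩ := walk_add h1 ((b - a).val) a
    calc (jahangir n m).dist (some a) (some b)
        ≤ (p.copy rfl (by rw [ZMod.natCast_zmod_val]; congr 1; ring)).length :=
          SimpleGraph.dist_le _
      _ = (b - a).val := by rw [SimpleGraph.Walk.length_copy]; exact hp

lemma dist_some_none_le [NeZero (n * m)] (h6 : 6 ≤ n) (hm4 : 4 ≤ m) (a : ZMod (n * m)) :
    (jahangir n m).dist (some a) none ≤ 1 + hubD n m a := by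
  obtain ⟨p, hp⟩ := walk_to_c h6 hm4 a
  exact hp ▸ SimpleGraph.dist_le p

lemma dist_viac_le [NeZero (n * m)] (h6 : 6 ≤ n) (hm4 : 4 ≤ m) (a b : ZMod (n * m)) :
    (jahangir n m).dist (some a) (some b) ≤ 2 + hubD n m a + hubD n m b := by
  obtain ⟨p, hp⟩ := walk_to_c h6 hm4 a
  obtain ⟨q, hq⟩ := walk_to_c h6 hm4 b
  calc (jahangir n m).dist (some a) (some b) ≤ (p.append q.reverse).length :=
        SimpleGraph.dist_le _
    _ = 2 + hubD n m a + hubD n m b := by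
        rw [SimpleGraph.Walk.length_append, SimpleGraph.Walk.length_reverse, hp, hq]; omega

lemma val_succ [NeZero (n * m)] (h1 : 1 < n * m) (x : ZMod (n * m)) :
    (x + 1).val = (x.val + 1) % (n * m) := by
  haveI : Fact (1 < n * m) := ⟨h1⟩
  rw [ZMod.val_add, ZMod.val_one]

lemma cyc_lip [NeZero (n * m)] (h1 : 1 < n * m) (b0 a b : ZMod (n * m))
    (hab : b = a + 1 ∨ a = b + 1) : cycD a b0 ≤ cycD b b0 + 1 := by
  suffices H : ∀ c : ZMod (n * m),
      cycD c b0 ≤ cycD (c + 1) b0 + 1 ∧ cycD (c + 1) b0 ≤ cycD c b0 + 1 by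
    rcases hab with rfl | rfl
    · exact (H a).1
    · exact (H b).2
  intro c
  set t := (c - b0).val with ht
  have h3 : (c + 1 - b0).val = (t + 1) % (n * m) := by
    rw [show c + 1 - b0 = (c - b0) + 1 by ring, val_succ h1]
  have h4 : (b0 - c).val = (n * m - t) % (n * m) := by
    rw [show b0 - c = -(c - b0) by ring, ZMod.neg_val']
  have h5 : (b0 - (c + 1)).val = (n * m - (t + 1) % (n * m)) % (n * m) := by
    rw [show b0 - (c + 1) = -(c + 1 - b0) by ring, ZMod.neg_val', h3]
  have h6 : t < n * m := ZMod.val_lt _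
  simp only [cycD]
  rw [h3, h4, h5, ← ht]
  clear_value t
  rcases Nat.lt_or_ge (t + 1) (n * m) with hB | hA
  · rw [Nat.mod_eq_of_lt hB, Nat.mod_eq_of_lt (show n * m - (t + 1) < n * m by omega)]
    rcases Nat.eq_zero_or_pos t with rfl | ht0
    · rw [Nat.sub_zero, Nat.mod_self]
      omega
    · rw [Nat.mod_eq_of_lt (show n * m - t < n * m by omega)]
      omega
  · have hA' : t + 1 = n * m := by omega
    rw [hA', Nat.mod_self, Nat.sub_zero, Nat.mod_self,
      Nat.mod_eq_of_lt (show n * m - t < n * m by omega)]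
    omega

lemma hub_lip [NeZero (n * m)] (h6 : 6 ≤ n) (h1 : 1 < n * m) (a b : ZMod (n * m))
    (hab : b = a + 1 ∨ a = b + 1) : hubD n m a ≤ hubD n m b + 1 := by
  suffices H : ∀ c : ZMod (n * m),
      hubD n m c ≤ hubD n m (c + 1) + 1 ∧ hubD n m (c + 1) ≤ hubD n m c + 1 by
    rcases hab with rfl | rfl
    · exact (H a).1
    · exact (H b).2
  intro c
  have hn1 : 1 < n := by omega
  set r := c.val % n with hr
  have hrn : r < n := by rw [hr]; exact Nat.mod_lt _ (by omega)
  have h2 : (c + 1).val % n = (r + 1) % n := by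
    rw [val_succ h1, Nat.mod_mod_of_dvd _ (dvd_mul_right n m), hr, Nat.add_mod,
      Nat.mod_eq_of_lt hn1]
  simp only [hubD]
  rw [h2, ← hr]
  rcases Nat.lt_or_ge (r + 1) n with hB | hA
  · rw [Nat.mod_eq_of_lt hB]
    omega
  · have : r + 1 = n := by omega
    rw [this, Nat.mod_self]
    omega

lemma hub_le_cycD [NeZero (n * m)] (h6 : 6 ≤ n) {k' : ℕ} (b0 : ZMod (n * m)) :
    hubD n m b0 ≤ cycD ((n * k' : ℕ) : ZMod (n * m)) b0 := by
  have hn0 : 0 < n := by omega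
  set H := ((n * k' : ℕ) : ZMod (n * m)) with hH
  have hHn : H.val % n = 0 := by rw [hH, valmod]; exact Nat.mul_mod_right n k'
  set r := b0.val % n with hr
  have hrn : r < n := by rw [hr]; exact Nat.mod_lt _ hn0
  have hhub : hubD n m b0 = min r (n - r) := rfl
  rcases Nat.eq_zero_or_pos r with h0 | h0
  · rw [hhub, h0]; simp
  refine le_min ?_ ?_
  · -- hubD b0 ≤ (H - b0).val
    set t := (H - b0).val with htdef
    have hval : (b0.val + t) % (n * m) = H.val := by
      calc (b0.val + t) % (n * m) = (b0 + (H - b0)).val := (ZMod.val_add _ _).symm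
        _ = H.val := by rw [add_sub_cancel]
    have hmod : (b0.val + t) % n = 0 := by
      have h7 := congrArg (· % n) hval
      rwa [Nat.mod_mod_of_dvd _ (dvd_mul_right n m), hHn] at h7
    rw [Nat.add_mod, ← hr] at hmod
    by_contra hcon
    push_neg at hcon
    have h8 : t % n = t := Nat.mod_eq_of_lt (by omega)
    rw [h8, Nat.mod_eq_of_lt (by omega)] at hmod
    omega
  · -- hubD b0 ≤ (b0 - H).val
    set u := (b0 - H).val with hudef
    have hval : (H.val + u) % (n * m) = b0.val := by
      calc (H.val + u) % (n * m) = (H + (b0 - H)).val := (ZMod.val_add _ _).symm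
        _ = b0.val := by rw [add_sub_cancel]
    have hmod : u % n = r := by
      have h7 := congrArg (· % n) hval
      rwa [Nat.mod_mod_of_dvd _ (dvd_mul_right n m), Nat.add_mod, hHn, Nat.zero_add,
        Nat.mod_mod_of_dvd _ dvd_rfl, ← hr] at h7
    have := Nat.mod_le u n
    omega

lemma pot_lip [NeZero (n * m)] (h6 : 6 ≤ n) (hm4 : 4 ≤ m) (b0 : ZMod (n * m))
    {x y : Option (ZMod (n * m))} (hadj : (jahangir n m).Adj x y) :
    pot n m b0 x ≤ pot n m b0 y + 1 := by
  have h1 : 1 < n * m := by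
    calc 1 < 6 * 4 := by norm_num
    _ ≤ n * m := Nat.mul_le_mul h6 hm4
  rcases hadj with ⟨hx, a, hy, k', hk', ha⟩ | ⟨hy, a, hx, k', hk', ha⟩ |
      ⟨a, b, hx, hy, hab, hor⟩
  · subst hx; subst hy; subst ha
    have h2 := hub_le_cycD (k' := k') h6 b0
    have h3 : hubD n m ((n * k' : ℕ) : ZMod (n * m)) = 0 := by
      have : ((n * k' : ℕ) : ZMod (n * m)).val % n = 0 := by
        rw [valmod]; exact Nat.mul_mod_right n k'
      simp only [hubD, this]
      simp
    simp only [pot, h3]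
    omega
  · subst hy; subst hx; subst ha
    have h3 : hubD n m ((n * k' : ℕ) : ZMod (n * m)) = 0 := by
      have : ((n * k' : ℕ) : ZMod (n * m)).val % n = 0 := by
        rw [valmod]; exact Nat.mul_mod_right n k'
      simp only [hubD, this]
      simp
    simp only [pot, h3]
    omega
  · subst hx; subst hy
    have h2 := cyc_lip h1 b0 a b hor
    have h3 := hub_lip h6 h1 a b hor
    simp only [pot]
    omega

lemma pot_le_of_walk [NeZero (n * m)] (h6 : 6 ≤ n) (hm4 : 4 ≤ m) (b0 : ZMod (n * m))
    {u v : Option (ZMod (n * m))} (p : (jahangir n m).Walk u v) :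
    pot n m b0 u ≤ pot n m b0 v + p.length := by
  induction p with
  | nil => simp
  | cons h q ih =>
      have := pot_lip h6 hm4 b0 h
      rw [SimpleGraph.Walk.length_cons]
      omega

lemma pot_self [NeZero (n * m)] (b0 : ZMod (n * m)) : pot n m b0 (some b0) = 0 := by
  simp [pot, cycD]

lemma dist_some_eq [NeZero (n * m)] (h6 : 6 ≤ n) (hm4 : 4 ≤ m) (a b0 : ZMod (n * m)) :
    (jahangir n m).dist (some a) (some b0) =
      min (cycD a b0) (2 + hubD n m a + hubD n m b0) := by
  have h1 : 1 < n * m := by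
    calc 1 < 6 * 4 := by norm_num
    _ ≤ n * m := Nat.mul_le_mul h6 hm4
  refine le_antisymm (le_min (dist_cyc_le h1 a b0) (dist_viac_le h6 hm4 a b0)) ?_
  obtain ⟨p, hp⟩ := walk_to_c h6 hm4 a
  obtain ⟨q, hq⟩ := walk_to_c h6 hm4 b0
  have hre : (jahangir n m).Reachable (some a) (some b0) := ⟨p.append q.reverse⟩
  obtain ⟨w, hw⟩ := hre.exists_walk_length_eq_dist
  have := pot_le_of_walk h6 hm4 b0 w
  rw [pot_self, hw] at this
  simpa [pot] using this

lemma dist_none_eq [NeZero (n * m)] (h6 : 6 ≤ n) (hm4 : 4 ≤ m) (b0 : ZMod (n * m)) :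
    (jahangir n m).dist none (some b0) = 1 + hubD n m b0 := by
  obtain ⟨q, hq⟩ := walk_to_c h6 hm4 b0
  refine le_antisymm ?_ ?_
  · calc (jahangir n m).dist none (some b0) ≤ q.reverse.length := SimpleGraph.dist_le _
      _ = 1 + hubD n m b0 := by rw [SimpleGraph.Walk.length_reverse, hq]
  · have hre : (jahangir n m).Reachable none (some b0) := ⟨q.reverse⟩
    obtain ⟨w, hw⟩ := hre.exists_walk_length_eq_dist
    have := pot_le_of_walk h6 hm4 b0 w
    rw [pot_self, hw] at this
    simpa [pot] using this

lemma dist_cast [NeZero (n * m)] (h6 : 6 ≤ n) (hm4 : 4 ≤ m) {s t d : ℕ}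
    (hs : s = t + d) (hd : 2 * d ≤ n * m) :
    (jahangir n m).dist (some (s : ZMod (n * m))) (some (t : ZMod (n * m))) =
      min d (2 + min (s % n) (n - s % n) + min (t % n) (n - t % n)) := by
  have hN : 0 < n * m := by positivity
  rw [dist_some_eq h6 hm4]
  have hcyc : cycD ((s : ZMod (n * m))) (t : ZMod (n * m)) = d := by
    subst hs
    have hsub : ((t + d : ℕ) : ZMod (n * m)) - (t : ZMod (n * m)) = (d : ZMod (n * m)) := by
      push_cast; ring
    rcases Nat.eq_zero_or_pos d with rfl | hd0
    · have h2 : (t : ZMod (n * m)) - ((t + 0 : ℕ) : ZMod (n * m)) = 0 := by push_cast; ring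
      have h3 : ((t + 0 : ℕ) : ZMod (n * m)) - (t : ZMod (n * m)) = 0 := by push_cast; ring
      simp [cycD, h2, h3]
    · have hd' : d < n * m := by omega
      have hv1 : (((t + d : ℕ) : ZMod (n * m)) - t).val = d := by
        rw [hsub, ZMod.val_natCast, Nat.mod_eq_of_lt hd']
      have hv2 : ((t : ZMod (n * m)) - ((t + d : ℕ) : ZMod (n * m))).val = n * m - d := by
        rw [show (t : ZMod (n * m)) - ((t + d : ℕ) : ZMod (n * m)) =
            -((((t + d : ℕ)) : ZMod (n * m)) - t) by ring, ZMod.neg_val', hv1,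
          Nat.mod_eq_of_lt (by omega)]
      simp only [cycD]
      rw [hv1, hv2]
      omega
  rw [hcyc]
  simp only [hubD, valmod]

lemma dist_nc [NeZero (n * m)] (h6 : 6 ≤ n) (hm4 : 4 ≤ m) (t : ℕ) :
    (jahangir n m).dist none (some (t : ZMod (n * m))) = 1 + min (t % n) (n - t % n) := by
  rw [dist_none_eq h6 hm4]
  simp only [hubD, valmod]

lemma dist_idx [NeZero (n * m)] (h6 : 6 ≤ n) (hm4 : 4 ≤ m) {k u v : ℕ}
    (huv : v ≤ u) (hd : 2 * (u - v) ≤ n * m) :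
    (jahangir n m).dist (some ((n * k + u : ℕ) : ZMod (n * m)))
        (some ((n * k + v : ℕ) : ZMod (n * m))) =
      min (u - v) (2 + min (u % n) (n - u % n) + min (v % n) (n - v % n)) := by
  rw [dist_cast h6 hm4 (show n * k + u = (n * k + v) + (u - v) by omega) hd,
    Nat.mul_add_mod, Nat.mul_add_mod]

lemma mmd_symm {V : Type*} {G : SimpleGraph V} {x y : V} (h : MMD G x y) : MMD G y x := by
  obtain ⟨h1, h2⟩ := h
  constructor
  · intro w hw
    rw [show G.dist w x = G.dist x w from SimpleGraph.dist_comm,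
      show G.dist y x = G.dist x y from SimpleGraph.dist_comm]
    exact h2 w hw
  · intro w hw
    rw [show G.dist y w = G.dist w y from SimpleGraph.dist_comm,
      show G.dist y x = G.dist x y from SimpleGraph.dist_comm]
    exact h1 w hw

lemma modsmall (h6 : 6 ≤ n) {w : ℕ} (hw : w ≤ n + 1) :
    (w < n ∧ w % n = w) ∨ (w = n ∧ w % n = 0) ∨ (w = n + 1 ∧ w % n = 1) := by
  rcases Nat.lt_or_ge w n with h | h
  · exact Or.inl ⟨h, Nat.mod_eq_of_lt h⟩
  · rcases Nat.eq_or_lt_of_le h with h' | h'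
    · exact Or.inr (Or.inl ⟨h'.symm, by rw [← h', Nat.mod_self]⟩)
    · have hw1 : w = n + 1 := by omega
      refine Or.inr (Or.inr ⟨hw1, ?_⟩)
      rw [hw1, show n + 1 = n * 1 + 1 by ring, Nat.mul_add_mod,
        Nat.mod_eq_of_lt (by omega)]

lemma idx_inj [NeZero (n * m)] (h6 : 6 ≤ n) (hm4 : 4 ≤ m) {k i j : ℕ} (hkm : k < m)
    (hi : i ≤ n) (hj : j ≤ n)
    (hij : ((n * k + i : ℕ) : ZMod (n * m)) = ((n * k + j : ℕ) : ZMod (n * m))) : i = j := by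
  have h1 := congrArg ZMod.val hij
  rw [ZMod.val_natCast, ZMod.val_natCast] at h1
  have hb : n * k + n ≤ n * m := by
    calc n * k + n = n * (k + 1) := by ring
      _ ≤ n * m := Nat.mul_le_mul_left n hkm
  have h2n : n + n ≤ n * m := by
    calc n + n = n * 2 := by ring
      _ ≤ n * m := Nat.mul_le_mul_left n (by omega)
  rcases Nat.lt_or_ge (n * k + i) (n * m) with hilt | hige
  · rcases Nat.lt_or_ge (n * k + j) (n * m) with hjlt | hjge
    · rw [Nat.mod_eq_of_lt hilt, Nat.mod_eq_of_lt hjlt] at h1; omega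
    · have he : n * k + j = n * m := by omega
      rw [Nat.mod_eq_of_lt hilt, he, Nat.mod_self] at h1
      omega
  · have he : n * k + i = n * m := by omega
    rcases Nat.lt_or_ge (n * k + j) (n * m) with hjlt | hjge
    · rw [he, Nat.mod_self, Nat.mod_eq_of_lt hjlt] at h1
      omega
    · omega

lemma not_mmd_c [NeZero (n * m)] (h6 : 6 ≤ n) (hev : Even n) (hm4 : 4 ≤ m) {k j : ℕ}
    (hk : k < m) (hj : j ≤ n) :
    ¬ MMD (jahangir n m) none (some ((n * k + j : ℕ) : ZMod (n * m))) := by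
  intro h
  obtain ⟨c, hc⟩ := hev
  have h4n : n * 4 ≤ n * m := Nat.mul_le_mul_left n hm4
  set k2 := (k + 2) % m with hk2
  have hk2m : k2 < m := Nat.mod_lt _ (by omega)
  have hle := h.1 _ (adj_hub hk2m)
  have h9 : n * k + j + (2 * n - j) = n * (k + 2) := by
    have : n * (k + 2) = n * k + (n + n) := by ring
    omega
  have hcast : ((n * k2 : ℕ) : ZMod (n * m)) =
      ((n * k + j + (2 * n - j) : ℕ) : ZMod (n * m)) := by
    rw [h9]
    have h10 : n * (k + 2) = n * k2 + (n * m) * ((k + 2) / m) := by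
      rw [hk2]
      conv_lhs => rw [← Nat.mod_add_div (k + 2) m]
      ring
    rw [h10]
    simp [Nat.cast_add, Nat.cast_mul, ZMod.natCast_self]
  rw [hcast, dist_cast h6 hm4 rfl (by omega), dist_nc h6 hm4] at hle
  have hs : (n * k + j + (2 * n - j)) % n = 0 := by
    rw [h9]; exact Nat.mul_mod_right _ _
  have htmod : (n * k + j) % n = j % n := Nat.mul_add_mod _ _ _
  rw [hs, htmod] at hle
  rcases modsmall h6 (show j ≤ n + 1 by omega) with ⟨hjlt, hjm⟩ | ⟨hjn, hjm⟩ | ⟨hjn, hjm⟩ <;>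
    rw [hjm] at hle <;> omega

lemma not_mmd_hub0 [NeZero (n * m)] (h6 : 6 ≤ n) (hev : Even n) (hm4 : 4 ≤ m) {k j : ℕ}
    (hk : k < m) (hj : j ≤ n) (hj1 : 1 ≤ j) :
    ¬ MMD (jahangir n m) (some ((n * k : ℕ) : ZMod (n * m)))
      (some ((n * k + j : ℕ) : ZMod (n * m))) := by
  intro h
  obtain ⟨c, hc⟩ := hev
  have h4n : n * 4 ≤ n * m := Nat.mul_le_mul_left n hm4
  have h1 : 1 < n * m := by omega
  set a := ((n * k : ℕ) : ZMod (n * m)) with ha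
  have hadj : (jahangir n m).Adj (some a) (some (a - 1)) := by
    have h2 := adj_succ h1 (a - 1)
    rw [sub_add_cancel] at h2
    exact h2.symm
  have hle := h.1 _ hadj
  -- a - 1 = cast (n*k + n*m - 1)
  have hw : a - 1 = ((n * k + n * m - 1 : ℕ) : ZMod (n * m)) := by
    have h3 : ((n * k + n * m - 1 : ℕ) : ZMod (n * m)) + 1 = a := by
      rw [show ((n * k + n * m - 1 : ℕ) : ZMod (n * m)) + 1 =
          ((n * k + n * m - 1 + 1 : ℕ) : ZMod (n * m)) by push_cast; ring,
        show n * k + n * m - 1 + 1 = n * k + n * m by omega, ha]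
      simp [Nat.cast_add, ZMod.natCast_self]
    rw [← h3, add_sub_cancel_right]
  have hy2 : ((n * k + j : ℕ) : ZMod (n * m)) = ((n * k + j + n * m : ℕ) : ZMod (n * m)) := by
    simp [Nat.cast_add, ZMod.natCast_self]
  -- mod facts
  have e1 : n * k + n * m - 1 = n * (k + m - 1) + (n - 1) := by
    have e2 : n * (k + m - 1) + n = n * (k + m) := by
      calc n * (k + m - 1) + n = n * (k + m - 1 + 1) := by ring
        _ = n * (k + m) := by rw [show k + m - 1 + 1 = k + m by omega]
    have e3 : n * (k + m) = n * k + n * m := by ring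
    omega
  have hm1 : (n * k + n * m - 1) % n = n - 1 := by
    rw [e1, Nat.mul_add_mod, Nat.mod_eq_of_lt (by omega)]
  have hm2 : (n * k + j + n * m) % n = j % n := by
    rw [show n * k + j + n * m = n * (k + m) + j by ring, Nat.mul_add_mod]
  have hm3 : (n * k + j) % n = j % n := Nat.mul_add_mod _ _ _
  have hdw : (jahangir n m).dist (some ((n * k + n * m - 1 : ℕ) : ZMod (n * m)))
      (some ((n * k + j : ℕ) : ZMod (n * m))) =
      min (j + 1) (2 + min (j % n) (n - j % n) + min (n - 1) (n - (n - 1))) := by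
    rw [SimpleGraph.dist_comm, hy2,
      dist_cast h6 hm4 (show n * k + j + n * m = (n * k + n * m - 1) + (j + 1) by omega)
        (by omega), hm2, hm1]
  have hdx : (jahangir n m).dist (some a) (some ((n * k + j : ℕ) : ZMod (n * m))) =
      min j (2 + min (j % n) (n - j % n) + min 0 (n - 0)) := by
    rw [ha, SimpleGraph.dist_comm,
      dist_cast h6 hm4 (show n * k + j = (n * k) + j from rfl) (by omega), hm3,
      Nat.mul_mod_right]
  rw [hw, hdw, hdx] at hle
  rcases modsmall h6 (show j ≤ n + 1 by omega) with ⟨hjlt, hjm⟩ | ⟨hjn, hjm⟩ | ⟨hjn, hjm⟩ <;>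
    rw [hjm] at hle <;> omega

lemma not_mmd_hubn [NeZero (n * m)] (h6 : 6 ≤ n) (hev : Even n) (hm4 : 4 ≤ m) {k j : ℕ}
    (hk : k < m) (hj : j < n) :
    ¬ MMD (jahangir n m) (some ((n * k + n : ℕ) : ZMod (n * m)))
      (some ((n * k + j : ℕ) : ZMod (n * m))) := by
  intro h
  obtain ⟨c, hc⟩ := hev
  have h4n : n * 4 ≤ n * m := Nat.mul_le_mul_left n hm4
  have h1 : 1 < n * m := by omega
  set a := ((n * k + n : ℕ) : ZMod (n * m)) with ha
  have hadj : (jahangir n m).Adj (some a) (some (a + 1)) := adj_succ h1 a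
  have hle := h.1 _ hadj
  have hw : a + 1 = ((n * k + (n + 1) : ℕ) : ZMod (n * m)) := by
    rw [ha]; push_cast; ring
  rw [hw, dist_idx h6 hm4 (le_of_lt (by omega)) (by omega),
    ha, show ((n * k + n : ℕ) : ZMod (n * m)) = ((n * k + n : ℕ) : ZMod (n * m)) from rfl,
    dist_idx h6 hm4 (le_of_lt hj) (by omega)] at hle
  have hmn : n % n = 0 := Nat.mod_self n
  have hmn1 : (n + 1) % n = 1 := by
    rw [show n + 1 = n * 1 + 1 by ring, Nat.mul_add_mod, Nat.mod_eq_of_lt (by omega)]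
  rw [hmn, hmn1, Nat.mod_eq_of_lt hj] at hle
  omega

lemma neighbors [NeZero (n * m)] {a : ZMod (n * m)} (hnh : a.val % n ≠ 0)
    {w : Option (ZMod (n * m))} (h : (jahangir n m).Adj (some a) w) :
    w = some (a + 1) ∨ w = some (a - 1) := by
  rcases h with ⟨hx, _⟩ | ⟨hw, a', hx, k', hk', ha'⟩ | ⟨a', b, hx, hw, hab, hor⟩
  · exact absurd hx (by simp)
  · exfalso
    apply hnh
    have haa : a = a' := Option.some.inj hx
    rw [haa, ha', valmod]
    exact Nat.mul_mod_right n k'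
  · have haa : a' = a := (Option.some.inj hx).symm
    rcases hor with h' | h'
    · left; rw [hw, h', haa]
    · right; rw [hw]; congr 1; rw [← haa, h']; ring

lemma u2_nbr_bound [NeZero (n * m)] (h6 : 6 ≤ n) (hev : Even n) (hm4 : 4 ≤ m) {k i j : ℕ}
    (hk : k < m) (hi1 : 1 ≤ i) (hin : i ≤ n - 1) (hj1 : 1 ≤ j) (hjn : j ≤ n - 1) :
    ∀ w, (jahangir n m).Adj (some ((n * k + i : ℕ) : ZMod (n * m))) w →
      (jahangir n m).dist w (some ((n * k + j : ℕ) : ZMod (n * m))) ≤ n / 2 + 1 := by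
  intro w hw
  obtain ⟨c, hc⟩ := hev
  have h4n : n * 4 ≤ n * m := Nat.mul_le_mul_left n hm4
  have hnh : ((n * k + i : ℕ) : ZMod (n * m)).val % n ≠ 0 := by
    rw [valmod, Nat.mul_add_mod, Nat.mod_eq_of_lt (by omega)]
    omega
  have hji : j % n = j := Nat.mod_eq_of_lt (by omega)
  rcases neighbors hnh hw with rfl | rfl
  · have hw1 : ((n * k + i : ℕ) : ZMod (n * m)) + 1 = ((n * k + (i + 1) : ℕ) : ZMod (n * m)) := by
      push_cast; ring
    rw [hw1]
    rcases le_total j (i + 1) with hcmp | hcmp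
    · rw [dist_idx h6 hm4 hcmp (by omega), hji]
      rcases modsmall h6 (show i + 1 ≤ n + 1 by omega) with ⟨_, hm'⟩ | ⟨_, hm'⟩ | ⟨_, hm'⟩ <;>
        rw [hm'] <;> omega
    · rw [SimpleGraph.dist_comm, dist_idx h6 hm4 hcmp (by omega), hji]
      rcases modsmall h6 (show i + 1 ≤ n + 1 by omega) with ⟨_, hm'⟩ | ⟨_, hm'⟩ | ⟨_, hm'⟩ <;>
        rw [hm'] <;> omega
  · have hw1 : ((n * k + i : ℕ) : ZMod (n * m)) - 1 = ((n * k + (i - 1) : ℕ) : ZMod (n * m)) := by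
      have h3 : ((n * k + (i - 1) : ℕ) : ZMod (n * m)) + 1 = ((n * k + i : ℕ) : ZMod (n * m)) := by
        rw [show ((n * k + (i - 1) : ℕ) : ZMod (n * m)) + 1 =
            ((n * k + (i - 1) + 1 : ℕ) : ZMod (n * m)) by push_cast; ring,
          show n * k + (i - 1) + 1 = n * k + i by omega]
      rw [← h3, add_sub_cancel_right]
    rw [hw1]
    rcases le_total j (i - 1) with hcmp | hcmp
    · rw [dist_idx h6 hm4 hcmp (by omega), hji, Nat.mod_eq_of_lt (show i - 1 < n by omega)]
      omega
    · rw [SimpleGraph.dist_comm, dist_idx h6 hm4 hcmp (by omega), hji,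
        Nat.mod_eq_of_lt (show i - 1 < n by omega)]
      omega

lemma mmd_u2 [NeZero (n * m)] (h6 : 6 ≤ n) (hev : Even n) (hm4 : 4 ≤ m) {k i j : ℕ}
    (hk : k < m) (hi1 : 1 ≤ i) (hin : i ≤ n - 1) (hj1 : 1 ≤ j) (hjn : j ≤ n - 1)
    (hdist : (jahangir n m).dist (some ((n * k + i : ℕ) : ZMod (n * m)))
      (some ((n * k + j : ℕ) : ZMod (n * m))) = n / 2 + 1) :
    MMD (jahangir n m) (some ((n * k + i : ℕ) : ZMod (n * m)))
      (some ((n * k + j : ℕ) : ZMod (n * m))) := by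
  constructor
  · intro w hw
    rw [hdist]
    exact u2_nbr_bound h6 hev hm4 hk hi1 hin hj1 hjn w hw
  · intro w hw
    rw [hdist, show (jahangir n m).dist (some ((n * k + i : ℕ) : ZMod (n * m))) w =
      (jahangir n m).dist w (some ((n * k + i : ℕ) : ZMod (n * m))) from SimpleGraph.dist_comm]
    exact u2_nbr_bound h6 hev hm4 hk hj1 hjn hi1 hin w hw

set_option maxHeartbeats 1000000 in
lemma not_mmd_u2 [NeZero (n * m)] (h6 : 6 ≤ n) (hev : Even n) (hm4 : 4 ≤ m) {k i j : ℕ}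
    (hk : k < m) (hi1 : 1 ≤ i) (hij : i < j) (hjn : j ≤ n - 1)
    (hne : (jahangir n m).dist (some ((n * k + i : ℕ) : ZMod (n * m)))
      (some ((n * k + j : ℕ) : ZMod (n * m))) ≠ n / 2 + 1) :
    ¬ MMD (jahangir n m) (some ((n * k + i : ℕ) : ZMod (n * m)))
      (some ((n * k + j : ℕ) : ZMod (n * m))) := by
  intro h
  obtain ⟨c, hc⟩ := hev
  have h4n : n * 4 ≤ n * m := Nat.mul_le_mul_left n hm4
  have h1 : 1 < n * m := by omega
  have him : i % n = i := Nat.mod_eq_of_lt (by omega)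
  have hjm : j % n = j := Nat.mod_eq_of_lt (by omega)
  have hD : (jahangir n m).dist (some ((n * k + i : ℕ) : ZMod (n * m)))
      (some ((n * k + j : ℕ) : ZMod (n * m))) =
      min (j - i) (2 + min j (n - j) + min i (n - i)) := by
    rw [SimpleGraph.dist_comm, dist_idx h6 hm4 (le_of_lt hij) (by omega), him, hjm]
  rw [hD] at hne
  -- helper equalities for the two neighbours of x
  have hwp : ((n * k + i : ℕ) : ZMod (n * m)) + 1 = ((n * k + (i + 1) : ℕ) : ZMod (n * m)) := by
    push_cast; ring
  have hwm : ((n * k + i : ℕ) : ZMod (n * m)) - 1 = ((n * k + (i - 1) : ℕ) : ZMod (n * m)) := by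
    have h3 : ((n * k + (i - 1) : ℕ) : ZMod (n * m)) + 1 = ((n * k + i : ℕ) : ZMod (n * m)) := by
      rw [show ((n * k + (i - 1) : ℕ) : ZMod (n * m)) + 1 =
          ((n * k + (i - 1) + 1 : ℕ) : ZMod (n * m)) by push_cast; ring,
        show n * k + (i - 1) + 1 = n * k + i by omega]
    rw [← h3, add_sub_cancel_right]
  have hadjm : (jahangir n m).Adj (some ((n * k + i : ℕ) : ZMod (n * m)))
      (some (((n * k + i : ℕ) : ZMod (n * m)) - 1)) := by
    have h2 := adj_succ h1 (((n * k + i : ℕ) : ZMod (n * m)) - 1)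
    rw [sub_add_cancel] at h2
    exact h2.symm
  rcases Nat.lt_or_ge i (n / 2 + 1) with hi_small | hi_big
  · rcases Nat.lt_or_ge j (n / 2) with hj_small | hj_big
    · -- neighbour y + 1
      have hadj : (jahangir n m).Adj (some ((n * k + j : ℕ) : ZMod (n * m)))
          (some (((n * k + j : ℕ) : ZMod (n * m)) + 1)) := adj_succ h1 _
      have hle := h.2 _ hadj
      rw [show ((n * k + j : ℕ) : ZMod (n * m)) + 1 = ((n * k + (j + 1) : ℕ) : ZMod (n * m))
          by push_cast; ring,
        show (jahangir n m).dist (some ((n * k + i : ℕ) : ZMod (n * m)))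
          (some ((n * k + (j + 1) : ℕ) : ZMod (n * m))) =
          (jahangir n m).dist (some ((n * k + (j + 1) : ℕ) : ZMod (n * m)))
          (some ((n * k + i : ℕ) : ZMod (n * m))) from SimpleGraph.dist_comm,
        dist_idx h6 hm4 (show i ≤ j + 1 by omega) (by omega), him,
        Nat.mod_eq_of_lt (show j + 1 < n by omega), hD] at hle
      omega
    · rcases Nat.lt_or_ge (j - i) (n / 2 + 1) with hs_small | hs_big
      · -- neighbour x - 1
        have hle := h.1 _ hadjm
        rw [hwm, show (jahangir n m).dist (some ((n * k + (i - 1) : ℕ) : ZMod (n * m)))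
            (some ((n * k + j : ℕ) : ZMod (n * m))) =
            (jahangir n m).dist (some ((n * k + j : ℕ) : ZMod (n * m)))
            (some ((n * k + (i - 1) : ℕ) : ZMod (n * m))) from SimpleGraph.dist_comm,
          dist_idx h6 hm4 (show i - 1 ≤ j by omega) (by omega), hjm,
          Nat.mod_eq_of_lt (show i - 1 < n by omega), hD] at hle
        omega
      · -- neighbour x + 1
        have hadj : (jahangir n m).Adj (some ((n * k + i : ℕ) : ZMod (n * m)))
            (some (((n * k + i : ℕ) : ZMod (n * m)) + 1)) := adj_succ h1 _
        have hle := h.1 _ hadj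
        rw [hwp, show (jahangir n m).dist (some ((n * k + (i + 1) : ℕ) : ZMod (n * m)))
            (some ((n * k + j : ℕ) : ZMod (n * m))) =
            (jahangir n m).dist (some ((n * k + j : ℕ) : ZMod (n * m)))
            (some ((n * k + (i + 1) : ℕ) : ZMod (n * m))) from SimpleGraph.dist_comm,
          dist_idx h6 hm4 (show i + 1 ≤ j by omega) (by omega), hjm,
          Nat.mod_eq_of_lt (show i + 1 < n by omega), hD] at hle
        omega
  · -- neighbour x - 1
    have hle := h.1 _ hadjm
    rw [hwm, show (jahangir n m).dist (some ((n * k + (i - 1) : ℕ) : ZMod (n * m)))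
        (some ((n * k + j : ℕ) : ZMod (n * m))) =
        (jahangir n m).dist (some ((n * k + j : ℕ) : ZMod (n * m)))
        (some ((n * k + (i - 1) : ℕ) : ZMod (n * m))) from SimpleGraph.dist_comm,
      dist_idx h6 hm4 (show i - 1 ≤ j by omega) (by omega), hjm,
      Nat.mod_eq_of_lt (show i - 1 < n by omega), hD] at hle
    omega

end JahP

open JahP in
theorem stmt_11 (n m : ℕ) (hn : 5 < n) (hev : Even n) (hm : 4 ≤ m) (k : ℕ) (hk : k < m)
    (x y : Option (ZMod (n * m))) (hxy : x ≠ y)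
    (hx : x ∈ internalCycle n m k) (hy : y ∈ internalCycle n m k) :
    MMD (jahangir n m) x y ↔
      inU2 n m x ∧ inU2 n m y ∧ (jahangir n m).dist x y = n / 2 + 1 := by
  have h6 : 6 ≤ n := hn
  haveI : NeZero (n * m) := ⟨Nat.mul_ne_zero (by omega) (by omega)⟩
  simp only [internalCycle, Set.mem_insert_iff, Set.mem_setOf_eq] at hx hy
  constructor
  · intro hmmd
    rcases hx with rfl | ⟨i, hi, rfl⟩
    · rcases hy with rfl | ⟨j, hj, rfl⟩
      · exact absurd rfl hxy
      · exact absurd hmmd (not_mmd_c h6 hev hm hk hj)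
    · rcases hy with rfl | ⟨j, hj, rfl⟩
      · exact absurd (mmd_symm hmmd) (not_mmd_c h6 hev hm hk hi)
      · have hij : i ≠ j := fun he => hxy (by rw [he])
        have hi0 : i ≠ 0 := by
          rintro rfl
          rw [Nat.add_zero] at hmmd
          exact not_mmd_hub0 h6 hev hm hk hj (by omega) hmmd
        have hj0 : j ≠ 0 := by
          rintro rfl
          rw [Nat.add_zero] at hmmd
          exact not_mmd_hub0 h6 hev hm hk hi (by omega) (mmd_symm hmmd)
        have hin : i ≠ n := by
          rintro rfl
          exact not_mmd_hubn h6 hev hm hk (by omega) hmmd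
        have hjn : j ≠ n := by
          rintro rfl
          exact not_mmd_hubn h6 hev hm hk (by omega) (mmd_symm hmmd)
        refine ⟨⟨_, rfl, ?_⟩, ⟨_, rfl, ?_⟩, ?_⟩
        · rw [hub_iff h6, valmod, Nat.mul_add_mod, Nat.mod_eq_of_lt (by omega)]
          omega
        · rw [hub_iff h6, valmod, Nat.mul_add_mod, Nat.mod_eq_of_lt (by omega)]
          omega
        · by_contra hne
          rcases Nat.lt_or_ge i j with hlt | hge
          · exact not_mmd_u2 h6 hev hm hk (by omega) hlt (by omega) hne hmmd
          · have hlt : j < i := by omega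
            exact not_mmd_u2 h6 hev hm hk (by omega) hlt (by omega)
              (fun hcon => hne ((SimpleGraph.dist_comm).trans hcon)) (mmd_symm hmmd)
  · rintro ⟨hxU, hyU, hdist⟩
    rcases hx with rfl | ⟨i, hi, rfl⟩
    · obtain ⟨a, ha, -⟩ := hxU
      exact absurd ha (by simp)
    rcases hy with rfl | ⟨j, hj, rfl⟩
    · obtain ⟨a, ha, -⟩ := hyU
      exact absurd ha (by simp)
    obtain ⟨a, ha, hnh⟩ := hxU
    obtain ⟨b, hb, hnhb⟩ := hyU
    rw [← Option.some.inj ha] at hnh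
    rw [← Option.some.inj hb] at hnhb
    rw [hub_iff h6, valmod, Nat.mul_add_mod] at hnh hnhb
    have hi' : 1 ≤ i ∧ i ≤ n - 1 := by
      rcases modsmall h6 (show i ≤ n + 1 by omega) with ⟨hlt', hm'⟩ | ⟨he, hm'⟩ | ⟨he, hm'⟩ <;> omega
    have hj' : 1 ≤ j ∧ j ≤ n - 1 := by
      rcases modsmall h6 (show j ≤ n + 1 by omega) with ⟨hlt', hm'⟩ | ⟨he, hm'⟩ | ⟨he, hm'⟩ <;> omega
    exact mmd_u2 h6 hev hm hk hi'.1 hi'.2 hj'.1 hj'.2 hdist
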